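/- Suppose for j=1,…,p the maps λ ↦ c_j(λ) are α-Lipschitz: |c_j(λ) - c_j(λ')| ≤ α|λ - λ'| for all λ, λ' > 0, with α ∈ (0,1]. If 0 < λ_k < λ_{k-1} and |c_j(λ_{k-1})| < α(2λ_k - λ_{k-1}), then |c_j(λ_k)| < αλ_k. -/
import Mathlib


theorem strong_rule_screening
    (p : ℕ) (c : Fin p → ℝ → ℝ) (α : ℝ) (hα0 : 0 < α) (hα1 : α ≤ 1)
    (hlip : ∀ j : Fin p, ∀ lam lam' : ℝ, 0 < lam → 0 < lam' →
      |c j lam - c j lam'| ≤ α * |lam - lam'|)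
    (lamk lamk1 : ℝ) (h0 : 0 < lamk) (hlt : lamk < lamk1) :
    ∀ j : Fin p, |c j lamk1| < α * (2 * lamk - lamk1) → |c j lamk| < α * lamk := by
  intro j hj
  have h1 := hlip j lamk lamk1 h0 (h0.trans hlt)
  have habs : |lamk - lamk1| = lamk1 - lamk := by
    rw [abs_of_nonpos (by linarith)]; ring
  rw [habs] at h1
  calc |c j lamk| ≤ |c j lamk1| + |c j lamk - c j lamk1| := by
        have := abs_sub_abs_le_abs_sub (c j lamk) (c j lamk1); linarith
    _ < α * (2 * lamk - lamk1) + α * (lamk1 - lamk) := by linarith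
    _ = α * lamk := by ring
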